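/- arXiv:gr-qc/0401093 — 2 statements merged into one kernel-verified Lean document; each statement's English description precedes it below -/
import Mathlib

section
/- Let δ_{ijc} ∈ {0,1} indicate admissibility of a triple of spins (i, j, c) at level r (i.e., triangle inequalities, integer sum, and i+j+c ≤ r-2). Then for fixed admissible spins j and c, Σ_{i ∈ L} δ_{ijc} · dim_q(i) = dim_q(c) · dim_q(j), where dim_q(j) = (-1)^{2j}[2j+1]_q and q = e^{iπ/r}. -/
open Real Finset

/-- Admissibility of a triple of spins (doubled-integer labels) at level `r`. -/
def Adm (r a b c : ℕ) : Prop :=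
  c ≤ a + b ∧ a ≤ b + c ∧ b ≤ a + c ∧ (a + b + c) % 2 = 0 ∧ a + b + c ≤ 2 * (r - 2)

instance (r a b c : ℕ) : Decidable (Adm r a b c) := by
  unfold Adm; infer_instance

private lemma negpow (n m : ℕ) (h : n % 2 = m % 2) : ((-1:ℝ))^n = (-1)^m := by
  rcases Nat.even_or_odd n with he | ho
  · have h0 : n % 2 = 0 := Nat.even_iff.mp he
    rw [he.neg_one_pow, (Nat.even_iff.mpr (by omega)).neg_one_pow]
  · have h1 : n % 2 = 1 := Nat.odd_iff.mp ho
    rw [ho.neg_one_pow, (Nat.odd_iff.mpr (by omega)).neg_one_pow]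

private lemma cos_step (A x : ℝ) :
    Real.cos A - Real.cos (A + 2*x) = 2 * Real.sin x * Real.sin (A + x) := by
  rw [Real.cos_sub_cos,
    show (A + (A + 2*x))/2 = A + x by ring,
    show (A - (A + 2*x))/2 = -x by ring, Real.sin_neg]
  ring

private lemma tele (x m : ℝ) (n : ℕ) :
    2 * Real.sin x * ∑ k ∈ Finset.range (n+1), Real.sin ((m + 2*(k:ℝ) + 1) * x)
      = Real.cos (m * x) - Real.cos ((m + 2*(n:ℝ) + 2) * x) := by
  induction n with
  | zero =>
      simp only [zero_add, Finset.sum_range_one, Nat.cast_zero]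
      rw [show (m + 2*(0:ℝ) + 1) * x = m*x + x by ring,
          show (m + 2*(0:ℝ) + 2) * x = m*x + 2*x by ring, ← cos_step]
  | succ n ih =>
      rw [Finset.sum_range_succ, mul_add, ih,
        show (m + 2*((n+1 : ℕ):ℝ) + 1) * x = (m + 2*(n:ℝ) + 2)*x + x by push_cast; ring,
        show (m + 2*((n+1 : ℕ):ℝ) + 2) * x = (m + 2*(n:ℝ) + 2)*x + 2*x by push_cast; ring]
      have h := cos_step ((m + 2*(n:ℝ) + 2)*x) x
      linarith

private lemma aux_dim_sum (r : ℕ) (hr : 3 ≤ r)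
    (d : ℕ → ℝ)
    (hd : ∀ a : ℕ, d a = (-1 : ℝ) ^ a *
      (Real.sin (((a : ℝ) + 1) * Real.pi / r) / Real.sin (Real.pi / r)))
    (b c : ℕ) (hb : b ≤ r - 2) (hc : c ≤ r - 2) (hcb : c ≤ b) :
    ∑ a ∈ Finset.range (r - 1), (if Adm r a b c then d a else 0) = d b * d c := by
  have hrR : (0:ℝ) < (r:ℝ) := by positivity
  set x : ℝ := Real.pi / r with hxdef
  have hxpos : 0 < x := by positivity
  have hxlt : x < Real.pi := by
    have h3 : (3:ℝ) ≤ (r:ℝ) := by exact_mod_cast hr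
    rw [hxdef, div_lt_iff₀ hrR]
    nlinarith [Real.pi_pos]
  have hs : Real.sin x ≠ 0 := ne_of_gt (Real.sin_pos_of_pos_of_lt_pi hxpos hxlt)
  set N := min c (r - 2 - b) with hN
  have key : (Finset.range (r-1)).filter (fun a => Adm r a b c)
      = (Finset.range (N+1)).image (fun k => b - c + 2*k) := by
    ext a
    simp only [Finset.mem_filter, Finset.mem_image, Finset.mem_range]
    constructor
    · rintro ⟨ha, h1, h2, h3, h4, h5⟩
      exact ⟨(a - (b - c))/2, by omega, by omega⟩
    · rintro ⟨k, hk, rfl⟩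
      refine ⟨by omega, ?_⟩
      unfold Adm
      omega
  rw [← Finset.sum_filter, key,
    Finset.sum_image (fun k1 _ k2 _ h => by omega : ∀ k1 ∈ Finset.range (N+1), ∀ k2 ∈ Finset.range (N+1), b - c + 2*k1 = b - c + 2*k2 → k1 = k2)]
  have hterm : ∀ k : ℕ, d (b - c + 2*k)
      = ((-1:ℝ)^(b+c) / Real.sin x) * Real.sin (((b:ℝ) - (c:ℝ) + 2*(k:ℝ) + 1) * x) := by
    intro k
    rw [hd, negpow (b - c + 2*k) (b+c) (by omega), mul_div_assoc, ← hxdef]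
    have h1 : ((b - c + 2*k : ℕ) : ℝ) = (b:ℝ) - c + 2*k := by
      push_cast [Nat.cast_sub hcb]; ring
    rw [h1]
    ring
  rw [Finset.sum_congr rfl (fun k _ => hterm k), ← Finset.mul_sum]
  -- compute the sine sum
  have hNR : ((b:ℝ) - c + 2*(N:ℝ) + 2) * x = 2*Real.pi - ((b:ℝ)+c+2)*x ∨
      ((b:ℝ) - c + 2*(N:ℝ) + 2) * x = ((b:ℝ)+c+2)*x := by
    rcases le_or_gt c (r - 2 - b) with h | h
    · right
      have : (N:ℝ) = c := by rw [hN, min_eq_left h]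
      rw [this]; ring
    · left
      have hNn : N + b + 2 = r := by omega
      have : (N:ℝ) = (r:ℝ) - (b:ℝ) - 2 := by
        have := congrArg (fun n : ℕ => (n:ℝ)) hNn
        push_cast at this
        linarith
      rw [this, hxdef]
      field_simp
      ring
  have hcosN : Real.cos (((b:ℝ) - c + 2*(N:ℝ) + 2) * x) = Real.cos (((b:ℝ)+c+2)*x) := by
    rcases hNR with h | h
    · rw [h, Real.cos_sub]
      simp [Real.cos_two_pi, Real.sin_two_pi]
    · rw [h]
  have hS : 2 * Real.sin x * ∑ k ∈ Finset.range (N+1),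
      Real.sin (((b:ℝ) - (c:ℝ) + 2*(k:ℝ) + 1) * x)
      = 2 * (Real.sin (((b:ℝ)+1)*x) * Real.sin (((c:ℝ)+1)*x)) := by
    have T := tele x ((b:ℝ) - c) N
    rw [hcosN] at T
    rw [T, Real.cos_sub_cos,
      show (((b:ℝ)-c)*x + ((b:ℝ)+c+2)*x)/2 = ((b:ℝ)+1)*x by ring,
      show (((b:ℝ)-c)*x - ((b:ℝ)+c+2)*x)/2 = -(((c:ℝ)+1)*x) by ring,
      Real.sin_neg]
    ring
  have hsum : ∑ k ∈ Finset.range (N+1),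
      Real.sin (((b:ℝ) - (c:ℝ) + 2*(k:ℝ) + 1) * x)
      = Real.sin (((b:ℝ)+1)*x) * Real.sin (((c:ℝ)+1)*x) / Real.sin x := by
    rw [eq_div_iff hs]
    linarith [hS]
  rw [hsum, hd b, hd c, mul_div_assoc, mul_div_assoc, ← hxdef]
  field_simp
  rw [pow_add]
  rw [hxdef]; ring_nf

/-- For fixed spins `b, c ∈ L` (doubled labels), summing the quantum dimension
over all `a` admissible with `(b,c)` gives `dim_q(b)·dim_q(c)`:
`Σ_a δ_{abc} dim_q(a) = dim_q(b) dim_q(c)`. -/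
theorem admissible_dim_sum (r : ℕ) (hr : 3 ≤ r)
    (d : ℕ → ℝ)
    (hd : ∀ a : ℕ, d a = (-1 : ℝ) ^ a *
      (Real.sin (((a : ℝ) + 1) * Real.pi / r) / Real.sin (Real.pi / r)))
    (b c : ℕ) (hb : b ≤ r - 2) (hc : c ≤ r - 2) :
    ∑ a ∈ Finset.range (r - 1), (if Adm r a b c then d a else 0) = d b * d c := by
  rcases le_total c b with hcb | hbc
  · exact aux_dim_sum r hr d hd b c hb hc hcb
  · have h := aux_dim_sum r hr d hd c b hc hb hbc
    rw [show d b * d c = d c * d b from mul_comm _ _, ← h]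
    exact Finset.sum_congr rfl fun a _ =>
      if_congr (by unfold Adm; omega) rfl rfl
end

section
/- The Verlinde fusion numbers N_{ab}^c := Σ_j S_{aj} S_{bj} S_{cj} / S_{0j} (sum over j ∈ {0,...,r-2}) are equal to the admissibility indicator: N_{ab}^c = 1 if the triple of spins (a/2, b/2, c/2) is admissible at level r, and 0 otherwise. -/
open Real Finset

/-- Telescoped cosine sum (Dirichlet-kernel style). -/
lemma cos_sum_tel (θ : ℝ) (hθ : Real.sin (θ / 2) ≠ 0) (n : ℕ) :
    ∑ t ∈ Finset.range n, Real.cos (((t : ℝ) + 1) * θ)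
      = (Real.sin (((n : ℝ) + 1 / 2) * θ) - Real.sin (θ / 2)) / (2 * Real.sin (θ / 2)) := by
  have key : ∀ t : ℕ, Real.cos (((t : ℝ) + 1) * θ)
      = (Real.sin (((t : ℝ) + 1 + 1 / 2) * θ) - Real.sin (((t : ℝ) + 1 / 2) * θ))
          / (2 * Real.sin (θ / 2)) := by
    intro t
    rw [Real.sin_sub_sin,
      show (((t : ℝ) + 1 + 1 / 2) * θ - ((t : ℝ) + 1 / 2) * θ) / 2 = θ / 2 by ring,
      show (((t : ℝ) + 1 + 1 / 2) * θ + ((t : ℝ) + 1 / 2) * θ) / 2 = ((t : ℝ) + 1) * θ by ring]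
    field_simp
  simp_rw [key]
  rw [← Finset.sum_div]
  congr 1
  have hc : ∀ t ∈ Finset.range n,
      Real.sin (((t : ℝ) + 1 + 1 / 2) * θ) - Real.sin (((t : ℝ) + 1 / 2) * θ)
        = (fun s : ℕ => Real.sin (((s : ℝ) + 1 / 2) * θ)) (t + 1)
          - (fun s : ℕ => Real.sin (((s : ℝ) + 1 / 2) * θ)) t := by
    intro t _
    simp only
    congr 2
    push_cast
    ring
  rw [Finset.sum_congr rfl hc,
    Finset.sum_range_sub (fun s : ℕ => Real.sin (((s : ℝ) + 1 / 2) * θ))]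
  congr 1
  congr 1
  push_cast
  ring

/-- Evaluation of the cosine sum. -/
lemma cos_sum_eval (r : ℕ) (hr : 3 ≤ r) (m : ℤ) :
    ∑ t ∈ Finset.range (r - 1), Real.cos ((m : ℝ) * ((t : ℝ) + 1) * Real.pi / (r : ℝ))
      = if (2 * (r : ℤ)) ∣ m then ((r : ℝ) - 1) else (-1 - (-1 : ℝ) ^ m) / 2 := by
  have hr0 : (r : ℝ) ≠ 0 := by
    have : (0 : ℝ) < r := by exact_mod_cast (by omega : 0 < r)
    linarith
  by_cases hd : (2 * (r : ℤ)) ∣ m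
  · rw [if_pos hd]
    obtain ⟨k, hk⟩ := hd
    have hone : ∀ t ∈ Finset.range (r - 1),
        Real.cos ((m : ℝ) * ((t : ℝ) + 1) * Real.pi / (r : ℝ)) = 1 := by
      intro t _
      have harg : (m : ℝ) * ((t : ℝ) + 1) * Real.pi / (r : ℝ)
          = ((k * (t + 1) : ℤ) : ℝ) * (2 * Real.pi) := by
        subst hk
        push_cast
        field_simp
      rw [harg, Real.cos_int_mul_two_pi]
    rw [Finset.sum_congr rfl hone, Finset.sum_const, Finset.card_range, nsmul_eq_mul, mul_one,
      Nat.cast_sub (by omega : 1 ≤ r), Nat.cast_one]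
  · rw [if_neg hd]
    have hsin : Real.sin ((m : ℝ) * Real.pi / (r : ℝ) / 2) ≠ 0 := by
      intro h
      rw [Real.sin_eq_zero_iff] at h
      obtain ⟨n, hn⟩ := h
      apply hd
      refine ⟨n, ?_⟩
      have h2 : ((2 * (r : ℤ) * n : ℤ) : ℝ) * Real.pi = (m : ℝ) * Real.pi := by
        push_cast
        field_simp at hn
        linear_combination Real.pi * hn
      have h3 : ((2 * (r : ℤ) * n : ℤ) : ℝ) = (m : ℝ) :=
        mul_right_cancel₀ Real.pi_ne_zero h2
      exact_mod_cast h3.symm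
    have harg : ∀ t : ℕ, (m : ℝ) * ((t : ℝ) + 1) * Real.pi / (r : ℝ)
        = ((t : ℝ) + 1) * ((m : ℝ) * Real.pi / (r : ℝ)) := by
      intro t; ring
    simp_rw [harg]
    rw [cos_sum_tel _ hsin]
    rw [show (((r - 1 : ℕ) : ℝ) + 1 / 2) * ((m : ℝ) * Real.pi / (r : ℝ))
        = (m : ℝ) * Real.pi - (m : ℝ) * Real.pi / (r : ℝ) / 2 by
      rw [Nat.cast_sub (by omega : 1 ≤ r)]
      push_cast
      field_simp
      ring]
    rw [Real.sin_int_mul_pi_sub,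
      div_eq_div_iff (mul_ne_zero (by norm_num : (2:ℝ) ≠ 0) hsin) (by norm_num : (2:ℝ) ≠ 0)]
    ring

/-- Orthogonality of the discrete sine transform. -/
lemma sin_orth (r : ℕ) (hr : 3 ≤ r) (p q : ℕ) (hp1 : 1 ≤ p) (hp2 : p ≤ 2 * r - 1)
    (hq1 : 1 ≤ q) (hq2 : q ≤ r - 1) :
    (2 / (r : ℝ)) * ∑ t ∈ Finset.range (r - 1),
        Real.sin ((p : ℝ) * ((t : ℝ) + 1) * Real.pi / (r : ℝ))
          * Real.sin ((q : ℝ) * ((t : ℝ) + 1) * Real.pi / (r : ℝ))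
      = (if p = q then 1 else 0) - (if p + q = 2 * r then 1 else 0) := by
  have hr0 : (r : ℝ) ≠ 0 := by
    have : (0 : ℝ) < r := by exact_mod_cast (by omega : 0 < r)
    linarith
  have key : ∀ t : ℕ,
      Real.sin ((p : ℝ) * ((t : ℝ) + 1) * Real.pi / (r : ℝ))
          * Real.sin ((q : ℝ) * ((t : ℝ) + 1) * Real.pi / (r : ℝ))
        = (Real.cos ((((p : ℤ) - (q : ℤ) : ℤ) : ℝ) * ((t : ℝ) + 1) * Real.pi / (r : ℝ))
            - Real.cos ((((p : ℤ) + (q : ℤ) : ℤ) : ℝ) * ((t : ℝ) + 1) * Real.pi / (r : ℝ))) / 2 := by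
    intro t
    rw [Real.cos_sub_cos]
    push_cast
    rw [show (((p : ℝ) - (q : ℝ)) * ((t : ℝ) + 1) * Real.pi / (r : ℝ)
          + ((p : ℝ) + (q : ℝ)) * ((t : ℝ) + 1) * Real.pi / (r : ℝ)) / 2
        = (p : ℝ) * ((t : ℝ) + 1) * Real.pi / (r : ℝ) by ring,
      show (((p : ℝ) - (q : ℝ)) * ((t : ℝ) + 1) * Real.pi / (r : ℝ)
          - ((p : ℝ) + (q : ℝ)) * ((t : ℝ) + 1) * Real.pi / (r : ℝ)) / 2
        = -((q : ℝ) * ((t : ℝ) + 1) * Real.pi / (r : ℝ)) by ring,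
      Real.sin_neg]
    ring
  simp_rw [key]
  rw [← Finset.sum_div, Finset.sum_sub_distrib,
    cos_sum_eval r hr ((p : ℤ) - (q : ℤ)), cos_sum_eval r hr ((p : ℤ) + (q : ℤ))]
  have hdvd1 : (2 * (r : ℤ)) ∣ ((p : ℤ) - (q : ℤ)) ↔ p = q := by
    constructor
    · intro h
      have h0 : (p : ℤ) - (q : ℤ) = 0 :=
        Int.eq_zero_of_abs_lt_dvd h (by rw [abs_lt]; omega)
      omega
    · intro h; simp [h]
  have hdvd2 : (2 * (r : ℤ)) ∣ ((p : ℤ) + (q : ℤ)) ↔ p + q = 2 * r := by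
    constructor
    · intro h
      have h' : (2 * (r : ℤ)) ∣ ((p : ℤ) + (q : ℤ) - 2 * (r : ℤ)) :=
        dvd_sub h ⟨1, by ring⟩
      have h0 : (p : ℤ) + (q : ℤ) - 2 * (r : ℤ) = 0 :=
        Int.eq_zero_of_abs_lt_dvd h' (by rw [abs_lt]; omega)
      omega
    · intro h; exact ⟨1, by omega⟩
  by_cases hpq : p = q
  · have hs : ¬(p + q = 2 * r) := by omega
    rw [if_pos (hdvd1.mpr hpq), if_neg (fun h => hs (hdvd2.mp h)), if_pos hpq, if_neg hs]
    have hpar : ((-1 : ℝ)) ^ ((p : ℤ) + (q : ℤ)) = 1 := by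
      rw [show (p : ℤ) + (q : ℤ) = 2 * q by omega, zpow_mul]
      norm_num
    rw [hpar]
    field_simp
    ring
  · by_cases hs : p + q = 2 * r
    · rw [if_neg (fun h => hpq (hdvd1.mp h)), if_pos (hdvd2.mpr hs), if_neg hpq, if_pos hs]
      have hpar : ((-1 : ℝ)) ^ ((p : ℤ) - (q : ℤ)) = 1 := by
        rw [show (p : ℤ) - (q : ℤ) = 2 * ((r : ℤ) - (q : ℤ)) by omega, zpow_mul]
        norm_num
      rw [hpar]
      field_simp
      ring
    · rw [if_neg (fun h => hpq (hdvd1.mp h)), if_neg (fun h => hs (hdvd2.mp h)),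
        if_neg hpq, if_neg hs]
      have hpar : ((-1 : ℝ)) ^ ((p : ℤ) + (q : ℤ)) = ((-1 : ℝ)) ^ ((p : ℤ) - (q : ℤ)) := by
        rw [show (p : ℤ) + (q : ℤ) = ((p : ℤ) - (q : ℤ)) + 2 * q by ring,
          zpow_add₀ (by norm_num : (-1 : ℝ) ≠ 0), zpow_mul]
        norm_num
      rw [hpar]
      ring

/-- Dirichlet-kernel expansion of a product of two sines. -/
lemma dirichlet (a b : ℕ) (x : ℝ) :
    Real.sin x * ∑ k ∈ Finset.range (min a b + 1),
        Real.sin (((a : ℝ) + (b : ℝ) + 1 - 2 * (k : ℝ)) * x)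
      = Real.sin (((a : ℝ) + 1) * x) * Real.sin (((b : ℝ) + 1) * x) := by
  rw [Finset.mul_sum]
  have key : ∀ k : ℕ, Real.sin x * Real.sin (((a : ℝ) + (b : ℝ) + 1 - 2 * (k : ℝ)) * x)
      = ((fun s : ℕ => Real.cos (((a : ℝ) + (b : ℝ) + 2 - 2 * (s : ℝ)) * x)) (k + 1)
        - (fun s : ℕ => Real.cos (((a : ℝ) + (b : ℝ) + 2 - 2 * (s : ℝ)) * x)) k) / 2 := by
    intro k
    simp only
    push_cast
    rw [Real.cos_sub_cos,
      show ((((a : ℝ) + (b : ℝ) + 2 - 2 * ((k : ℝ) + 1)) * x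
          + ((a : ℝ) + (b : ℝ) + 2 - 2 * (k : ℝ)) * x) / 2)
        = ((a : ℝ) + (b : ℝ) + 1 - 2 * (k : ℝ)) * x by ring,
      show ((((a : ℝ) + (b : ℝ) + 2 - 2 * ((k : ℝ) + 1)) * x
          - ((a : ℝ) + (b : ℝ) + 2 - 2 * (k : ℝ)) * x) / 2) = -x by ring,
      Real.sin_neg]
    ring
  simp_rw [key]
  rw [← Finset.sum_div, Finset.sum_range_sub
    (fun s : ℕ => Real.cos (((a : ℝ) + (b : ℝ) + 2 - 2 * (s : ℝ)) * x))]
  rcases le_total a b with h | h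
  · rw [min_eq_left h]
    push_cast
    rw [Real.cos_sub_cos,
      show ((((a : ℝ) + (b : ℝ) + 2 - 2 * ((a : ℝ) + 1)) * x
          + ((a : ℝ) + (b : ℝ) + 2 - 2 * 0) * x) / 2) = ((b : ℝ) + 1) * x by ring,
      show ((((a : ℝ) + (b : ℝ) + 2 - 2 * ((a : ℝ) + 1)) * x
          - ((a : ℝ) + (b : ℝ) + 2 - 2 * 0) * x) / 2) = -(((a : ℝ) + 1) * x) by ring,
      Real.sin_neg]
    ring
  · rw [min_eq_right h]
    push_cast
    rw [Real.cos_sub_cos,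
      show ((((a : ℝ) + (b : ℝ) + 2 - 2 * ((b : ℝ) + 1)) * x
          + ((a : ℝ) + (b : ℝ) + 2 - 2 * 0) * x) / 2) = ((a : ℝ) + 1) * x by ring,
      show ((((a : ℝ) + (b : ℝ) + 2 - 2 * ((b : ℝ) + 1)) * x
          - ((a : ℝ) + (b : ℝ) + 2 - 2 * 0) * x) / 2) = -(((b : ℝ) + 1) * x) by ring,
      Real.sin_neg]
    ring

/-- Counting an indicator sum. -/
lemma indSum (n s t : ℕ) :
    ∑ k ∈ Finset.range n, (if 2 * k + s = t then (1 : ℝ) else 0)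
      = if s ≤ t ∧ (t - s) % 2 = 0 ∧ t - s < 2 * n then 1 else 0 := by
  by_cases h : s ≤ t ∧ (t - s) % 2 = 0
  · have hcong : ∀ k ∈ Finset.range n,
        (if 2 * k + s = t then (1 : ℝ) else 0) = (if k = (t - s) / 2 then (1 : ℝ) else 0) := by
      intro k _
      exact if_congr (by omega) rfl rfl
    rw [Finset.sum_congr rfl hcong,
      Finset.sum_ite_eq' (Finset.range n) ((t - s) / 2) (fun _ => (1 : ℝ))]
    simp only [Finset.mem_range]
    exact if_congr (by omega) rfl rfl
  · rw [if_neg (by tauto)]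
    apply Finset.sum_eq_zero
    intro k _
    rw [if_neg (by omega)]

set_option maxHeartbeats 1000000 in
/-- The Verlinde formula for SU(2) at level `r-2`: the fusion numbers
`N_{ab}^c = Σ_j S_{aj} S_{bj} S_{cj} / S_{0j}` equal the admissibility
indicator of the triple `(a/2, b/2, c/2)`. -/
theorem verlinde_formula (r : ℕ) (hr : 3 ≤ r)
    (S : ℕ → ℕ → ℝ)
    (hS : ∀ a b : ℕ, S a b = Real.sqrt (2 / r) *
      Real.sin (((a : ℝ) + 1) * ((b : ℝ) + 1) * Real.pi / r))
    (a b c : ℕ) (ha : a ≤ r - 2) (hb : b ≤ r - 2) (hc : c ≤ r - 2) :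
    ∑ j ∈ Finset.range (r - 1), S a j * S b j * S c j / S 0 j
      = if Adm r a b c then 1 else 0 := by
  have hm1 : min a b ≤ a := Nat.min_le_left a b
  have hm2 : min a b ≤ b := Nat.min_le_right a b
  have hm3 : min a b = a ∨ min a b = b := min_choice a b
  have hrR : (0 : ℝ) < (r : ℝ) := by exact_mod_cast (by omega : 0 < r)
  have hπ := Real.pi_pos
  have h2r : (0 : ℝ) < 2 / (r : ℝ) := by positivity
  have hsq : Real.sqrt (2 / (r : ℝ)) ^ 2 = 2 / (r : ℝ) := Real.sq_sqrt (le_of_lt h2r)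
  have hsqne : Real.sqrt (2 / (r : ℝ)) ≠ 0 := by positivity
  have hterm : ∀ j ∈ Finset.range (r - 1),
      S a j * S b j * S c j / S 0 j
        = ∑ k ∈ Finset.range (min a b + 1),
            (2 / (r : ℝ)) * (Real.sin (((a + b + 1 - 2 * k : ℕ) : ℝ) * ((j : ℝ) + 1) * Real.pi / (r : ℝ))
              * Real.sin (((c + 1 : ℕ) : ℝ) * ((j : ℝ) + 1) * Real.pi / (r : ℝ))) := by
    intro j hj
    rw [Finset.mem_range] at hj
    have hj1 : (j : ℝ) + 1 < (r : ℝ) := by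
      have : (j + 1 : ℕ) < r := by omega
      exact_mod_cast this
    have hx0 : (0 : ℝ) < ((j : ℝ) + 1) * Real.pi / (r : ℝ) := by positivity
    have hxpi : ((j : ℝ) + 1) * Real.pi / (r : ℝ) < Real.pi := by
      rw [div_lt_iff₀ hrR]
      nlinarith
    have hsx : Real.sin (((j : ℝ) + 1) * Real.pi / (r : ℝ)) ≠ 0 :=
      ne_of_gt (Real.sin_pos_of_pos_of_lt_pi hx0 hxpi)
    have main : Real.sin (((a : ℝ) + 1) * ((j : ℝ) + 1) * Real.pi / (r : ℝ))
          * Real.sin (((b : ℝ) + 1) * ((j : ℝ) + 1) * Real.pi / (r : ℝ))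
        = Real.sin (((j : ℝ) + 1) * Real.pi / (r : ℝ))
          * ∑ k ∈ Finset.range (min a b + 1),
              Real.sin (((a + b + 1 - 2 * k : ℕ) : ℝ) * ((j : ℝ) + 1) * Real.pi / (r : ℝ)) := by
      have hD := dirichlet a b (((j : ℝ) + 1) * Real.pi / (r : ℝ))
      rw [show ((a : ℝ) + 1) * (((j : ℝ) + 1) * Real.pi / (r : ℝ))
            = ((a : ℝ) + 1) * ((j : ℝ) + 1) * Real.pi / (r : ℝ) by ring,
          show ((b : ℝ) + 1) * (((j : ℝ) + 1) * Real.pi / (r : ℝ))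
            = ((b : ℝ) + 1) * ((j : ℝ) + 1) * Real.pi / (r : ℝ) by ring] at hD
      rw [← hD]
      congr 1
      refine Finset.sum_congr rfl fun k hk => ?_
      rw [Finset.mem_range] at hk
      have h2k : 2 * k ≤ a + b + 1 := by omega
      congr 1
      rw [Nat.cast_sub h2k]
      push_cast
      ring
    simp only [hS]
    rw [show (((0 : ℕ) : ℝ) + 1) * ((j : ℝ) + 1) * Real.pi / (r : ℝ)
        = ((j : ℝ) + 1) * Real.pi / (r : ℝ) by push_cast; ring]
    rw [div_eq_iff (mul_ne_zero hsqne hsx)]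
    rw [show (∑ k ∈ Finset.range (min a b + 1),
          (2 / (r : ℝ)) * (Real.sin (((a + b + 1 - 2 * k : ℕ) : ℝ) * ((j : ℝ) + 1) * Real.pi / (r : ℝ))
            * Real.sin (((c + 1 : ℕ) : ℝ) * ((j : ℝ) + 1) * Real.pi / (r : ℝ))))
        = (2 / (r : ℝ)) * Real.sin (((c + 1 : ℕ) : ℝ) * ((j : ℝ) + 1) * Real.pi / (r : ℝ))
          * ∑ k ∈ Finset.range (min a b + 1),
              Real.sin (((a + b + 1 - 2 * k : ℕ) : ℝ) * ((j : ℝ) + 1) * Real.pi / (r : ℝ)) by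
      rw [Finset.mul_sum]
      exact Finset.sum_congr rfl fun k _ => by ring]
    rw [show (((c + 1 : ℕ) : ℝ)) = (c : ℝ) + 1 by push_cast; ring]
    set T := ∑ k ∈ Finset.range (min a b + 1),
        Real.sin (((a + b + 1 - 2 * k : ℕ) : ℝ) * ((j : ℝ) + 1) * Real.pi / (r : ℝ)) with hT
    set sA := Real.sin (((a : ℝ) + 1) * ((j : ℝ) + 1) * Real.pi / (r : ℝ)) with hsA
    set sB := Real.sin (((b : ℝ) + 1) * ((j : ℝ) + 1) * Real.pi / (r : ℝ)) with hsB
    set sC := Real.sin (((c : ℝ) + 1) * ((j : ℝ) + 1) * Real.pi / (r : ℝ)) with hsC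
    set s0 := Real.sin (((j : ℝ) + 1) * Real.pi / (r : ℝ)) with hs0
    linear_combination (Real.sqrt (2 / (r : ℝ))) ^ 3 * sC * main
      + Real.sqrt (2 / (r : ℝ)) * sC * s0 * T * hsq
  calc ∑ j ∈ Finset.range (r - 1), S a j * S b j * S c j / S 0 j
      = ∑ j ∈ Finset.range (r - 1), ∑ k ∈ Finset.range (min a b + 1),
          (2 / (r : ℝ)) * (Real.sin (((a + b + 1 - 2 * k : ℕ) : ℝ) * ((j : ℝ) + 1) * Real.pi / (r : ℝ))
            * Real.sin (((c + 1 : ℕ) : ℝ) * ((j : ℝ) + 1) * Real.pi / (r : ℝ))) :=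
        Finset.sum_congr rfl hterm
    _ = ∑ k ∈ Finset.range (min a b + 1), ∑ j ∈ Finset.range (r - 1),
          (2 / (r : ℝ)) * (Real.sin (((a + b + 1 - 2 * k : ℕ) : ℝ) * ((j : ℝ) + 1) * Real.pi / (r : ℝ))
            * Real.sin (((c + 1 : ℕ) : ℝ) * ((j : ℝ) + 1) * Real.pi / (r : ℝ))) :=
        Finset.sum_comm
    _ = ∑ k ∈ Finset.range (min a b + 1),
          ((if a + b + 1 - 2 * k = c + 1 then (1 : ℝ) else 0)
            - (if (a + b + 1 - 2 * k) + (c + 1) = 2 * r then (1 : ℝ) else 0)) := by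
        refine Finset.sum_congr rfl fun k hk => ?_
        rw [Finset.mem_range] at hk
        rw [← Finset.mul_sum]
        exact sin_orth r hr (a + b + 1 - 2 * k) (c + 1) (by omega) (by omega) (by omega) (by omega)
    _ = ∑ k ∈ Finset.range (min a b + 1),
          ((if 2 * k + c = a + b then (1 : ℝ) else 0)
            - (if 2 * k + 2 * r = a + b + c + 2 then (1 : ℝ) else 0)) := by
        refine Finset.sum_congr rfl fun k hk => ?_
        rw [Finset.mem_range] at hk
        congr 1 <;> exact if_congr (by omega) rfl rfl
    _ = (∑ k ∈ Finset.range (min a b + 1), (if 2 * k + c = a + b then (1 : ℝ) else 0))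
          - ∑ k ∈ Finset.range (min a b + 1), (if 2 * k + 2 * r = a + b + c + 2 then (1 : ℝ) else 0) :=
        Finset.sum_sub_distrib _ _
    _ = (if c ≤ a + b ∧ (a + b - c) % 2 = 0 ∧ a + b - c < 2 * (min a b + 1) then (1 : ℝ) else 0)
          - (if 2 * r ≤ a + b + c + 2 ∧ (a + b + c + 2 - 2 * r) % 2 = 0
              ∧ a + b + c + 2 - 2 * r < 2 * (min a b + 1) then (1 : ℝ) else 0) := by
        rw [indSum, indSum]
    _ = if Adm r a b c then 1 else 0 := by
        by_cases hA : Adm r a b c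
        · rw [if_pos hA]; unfold Adm at hA
          rcases hm3 with hm | hm <;> rw [hm] <;>
            split_ifs <;> norm_num <;> omega
        · rw [if_neg hA]; unfold Adm at hA
          rcases hm3 with hm | hm <;> rw [hm] <;>
            split_ifs <;> norm_num <;> omega
end
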